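/- arXiv:2212.09673 — 2 statements merged into one kernel-verified Lean document; each statement's English description precedes it below -/
import Mathlib

section
/- Let t₁, t₂ ∈ ℝ² be unit vectors and let M = (t₁, t₂) be the 2×2 matrix with columns t₁ and t₂. Let θ satisfy cos θ = ⟨t₁, t₂⟩, and assume sin θ ≠ 0 (so M is invertible). Then the spectral condition number cond₂(M) = ‖M⁻¹‖₂‖M‖₂ satisfies cond₂(M) ≤ 2/|sin θ|. -/
/-!
The spectral norm is bounded by the Frobenius norm. The columns of `M` are unit vectors, so
`‖M‖_F² = 2`; for a `2 × 2` matrix the adjugate has the same Frobenius norm as `M`, so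
`‖M⁻¹‖_F² = 2 / det M²`, and Lagrange's identity `det M² + ⟪t₁, t₂⟫² = ‖t₁‖²‖t₂‖²` gives
`det M² = 1 - cos² θ = sin² θ`. Hence `cond₂ M ≤ √(2 / sin² θ) · √2 = 2 / |sin θ|`.
-/

open Real Matrix

theorem Matrix.l2_opNorm_toEuclideanCLM_le_sqrt_sum_sq {n : Type*} [Fintype n] [DecidableEq n]
    (A : Matrix n n ℝ) :
    ‖toEuclideanCLM (𝕜 := ℝ) A‖ ≤ √(∑ i, ∑ j, A i j ^ 2) := by
  refine ContinuousLinearMap.opNorm_le_bound _ (sqrt_nonneg _) fun x => ?_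
  rw [← pow_le_pow_iff_left₀ (norm_nonneg _) (by positivity) two_ne_zero, mul_pow,
    sq_sqrt (by positivity), EuclideanSpace.norm_sq_eq, EuclideanSpace.norm_sq_eq,
    Finset.sum_mul]
  gcongr with i
  simp only [ofLp_toEuclideanCLM, mulVec, dotProduct, Real.norm_eq_abs, sq_abs]
  exact Finset.sum_mul_sq_le_sq_mul_sq _ _ _

-- Also true for singular `A`, where both sides are `0` since `A⁻¹ = 0` and `x / 0 = 0`.
theorem Matrix.sum_sq_inv_fin_two (A : Matrix (Fin 2) (Fin 2) ℝ) :
    ∑ i, ∑ j, A⁻¹ i j ^ 2 = (∑ i, ∑ j, A i j ^ 2) / A.det ^ 2 := by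
  rw [inv_def, adjugate_fin_two, Ring.inverse_eq_inv']
  simp only [Fin.sum_univ_two, smul_apply, smul_eq_mul, of_apply, cons_val', cons_val_zero,
    cons_val_one, empty_val', cons_val_fin_one]
  ring

theorem EuclideanSpace.cross_sq_add_inner_sq (u v : EuclideanSpace ℝ (Fin 2)) :
    (u 0 * v 1 - u 1 * v 0) ^ 2 + inner ℝ u v ^ 2 = ‖u‖ ^ 2 * ‖v‖ ^ 2 := by
  simp only [EuclideanSpace.norm_sq_eq, PiLp.inner_apply, Fin.sum_univ_two, Real.norm_eq_abs,
    sq_abs, RCLike.inner_apply, conj_trivial]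
  ring

theorem stmt2_general (t₁ t₂ : EuclideanSpace ℝ (Fin 2)) (ht₁ : ‖t₁‖ = 1) (ht₂ : ‖t₂‖ = 1)
    (θ : ℝ) (hθ : Real.cos θ = inner ℝ t₁ t₂)
    (M : Matrix (Fin 2) (Fin 2) ℝ)
    (hM : ∀ i, M i 0 = t₁ i ∧ M i 1 = t₂ i) :
    ‖Matrix.toEuclideanCLM (𝕜 := ℝ) M⁻¹‖ * ‖Matrix.toEuclideanCLM (𝕜 := ℝ) M‖ ≤
      2 / |Real.sin θ| := by
  obtain ⟨⟨h00, h01⟩, ⟨h10, h11⟩⟩ := And.intro (hM 0) (hM 1)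
  have hsum : ∑ i, ∑ j, M i j ^ 2 = 2 := by
    have h₁ := EuclideanSpace.norm_sq_eq t₁
    have h₂ := EuclideanSpace.norm_sq_eq t₂
    simp only [ht₁, ht₂, Fin.sum_univ_two, Real.norm_eq_abs, sq_abs] at h₁ h₂
    simp only [Fin.sum_univ_two, h00, h01, h10, h11]
    linarith
  have hdet : M.det ^ 2 = sin θ ^ 2 := by
    have h := EuclideanSpace.cross_sq_add_inner_sq t₁ t₂
    rw [ht₁, ht₂, ← hθ] at h
    rw [det_fin_two, h00, h01, h10, h11]
    nlinarith [sin_sq_add_cos_sq θ]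
  calc ‖toEuclideanCLM (𝕜 := ℝ) M⁻¹‖ * ‖toEuclideanCLM (𝕜 := ℝ) M‖
      ≤ √(2 / sin θ ^ 2) * √2 := by
        rw [← hsum, ← hdet, ← sum_sq_inv_fin_two]
        gcongr <;> exact l2_opNorm_toEuclideanCLM_le_sqrt_sum_sq _
    _ = 2 / |sin θ| := by
        rw [sqrt_div' _ (sq_nonneg _), sqrt_sq_eq_abs, div_mul_eq_mul_div,
          mul_self_sqrt zero_le_two]

theorem stmt2 (t₁ t₂ : EuclideanSpace ℝ (Fin 2)) (ht₁ : ‖t₁‖ = 1) (ht₂ : ‖t₂‖ = 1)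
    (θ : ℝ) (hθ : Real.cos θ = inner ℝ t₁ t₂) (hsin : Real.sin θ ≠ 0)
    (M : Matrix (Fin 2) (Fin 2) ℝ)
    (hM : ∀ i, M i 0 = t₁ i ∧ M i 1 = t₂ i) :
    ‖Matrix.toEuclideanCLM (𝕜 := ℝ) M⁻¹‖ * ‖Matrix.toEuclideanCLM (𝕜 := ℝ) M‖ ≤
      2 / |Real.sin θ| :=
  stmt2_general t₁ t₂ ht₁ ht₂ θ hθ M hM
end

section
/- Let K ⊂ ℝ² be a (nondegenerate) triangle with vertex z and let λ_z : K → ℝ be the barycentric coordinate associated to z (the affine function with λ_z(z) = 1 and λ_z = 0 on the opposite edge). Then ∫_K P_k^{(0,2)}(1 − 2λ_z(x)) dx = (−1)^k |K| / binom(k+2,2), where |K| is the area of K. -/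
open MeasureTheory

/-- The Jacobi polynomial `P_k^{(0,2)}`, normalized by `P_k^{(0,2)}(1) = 1`. -/
noncomputable def jacobiP02 (k : ℕ) (x : ℝ) : ℝ :=
  ∑ s ∈ Finset.range (k + 1),
    (k.choose (k - s) : ℝ) * ((k + 2).choose s : ℝ) *
      ((x - 1) / 2) ^ s * ((x + 1) / 2) ^ (k - s)

/-! The affine map `p ↦ p₀ z + p₁ A + (1 - p₀ - p₁) B` carries the reference triangle
onto `K` and pulls `λ_z` back to the first coordinate, so change of variables and Fubini
give `∫_K g(λ_z) = 2 |K| ∫₀¹ (1 - t) g(t) dt`. For `g(t) = P_k^{(0,2)}(1 - 2t)`, expanding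
the Jacobi polynomial reduces this moment to Beta integrals
`∫₀¹ t^s (1 - t)^m = s! m! / (s + m + 1)!`, and the alternating sum
`∑ₛ (-1)^s C(k,s) / (k - s + 2)` that remains is
`∫₀¹ x (x - 1)^k = (-1)^k / ((k + 1)(k + 2))`. -/

open Set
open scoped Nat

theorem integral_pow_mul_one_sub_pow_succ (s m : ℕ) :
    ∫ x in (0 : ℝ)..1, x ^ s * (1 - x) ^ (m + 1) =
      (m + 1) / (s + 1) * ∫ x in (0 : ℝ)..1, x ^ (s + 1) * (1 - x) ^ m := by
  have hu (x : ℝ) : HasDerivAt (fun x : ℝ => (1 - x) ^ (m + 1)) (-((m + 1) * (1 - x) ^ m)) x :=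
    (((hasDerivAt_id x).const_sub 1).pow (m + 1)).congr_deriv (by simp)
  have hv (x : ℝ) : HasDerivAt (fun x : ℝ => x ^ (s + 1) / (s + 1)) (x ^ s) x :=
    ((hasDerivAt_pow (s + 1) x).div_const ((s : ℝ) + 1)).congr_deriv (by field_simp; simp)
  have ibp := intervalIntegral.integral_mul_deriv_eq_deriv_mul (a := 0) (b := 1)
    (fun x _ => hu x) (fun x _ => hv x) (by apply Continuous.intervalIntegrable; fun_prop)
    (by apply Continuous.intervalIntegrable; fun_prop)
  simp only [sub_self, zero_pow (Nat.succ_ne_zero _), zero_mul, zero_div, mul_zero, sub_zero,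
    neg_mul, intervalIntegral.integral_neg, sub_neg_eq_add, zero_add] at ibp
  rw [← intervalIntegral.integral_const_mul]
  calc ∫ x in (0 : ℝ)..1, x ^ s * (1 - x) ^ (m + 1)
      = ∫ x in (0 : ℝ)..1, (1 - x) ^ (m + 1) * x ^ s :=
        intervalIntegral.integral_congr fun x _ => mul_comm _ _
    _ = _ := by
        rw [ibp]
        exact intervalIntegral.integral_congr fun x _ => by field_simp

theorem integral_pow_mul_one_sub_pow (s m : ℕ) :
    ∫ x in (0 : ℝ)..1, x ^ s * (1 - x) ^ m = s ! * m ! / (s + m + 1)! := by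
  induction m generalizing s with
  | zero => simp [Nat.factorial_succ]; field_simp
  | succ m ih =>
    rw [integral_pow_mul_one_sub_pow_succ, ih, show s + 1 + m + 1 = s + (m + 1) + 1 by ring]
    simp only [Nat.factorial_succ]
    push_cast
    field_simp

theorem sum_range_neg_one_pow_mul_choose_div (k : ℕ) :
    ∑ s ∈ Finset.range (k + 1), (-1 : ℝ) ^ s * k.choose s / ((k - s : ℕ) + 2) =
      (-1) ^ k / ((k + 1) * (k + 2)) := by
  have hsum : ∫ x in (0 : ℝ)..1, x * (-1 + x) ^ k =
      ∑ s ∈ Finset.range (k + 1), (-1 : ℝ) ^ s * k.choose s / ((k - s : ℕ) + 2) := by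
    simp_rw [add_pow, Finset.mul_sum]
    rw [intervalIntegral.integral_finsetSum fun s _ => by
      apply Continuous.intervalIntegrable; fun_prop]
    refine Finset.sum_congr rfl fun s _ => ?_
    calc ∫ x in (0 : ℝ)..1, x * ((-1) ^ s * x ^ (k - s) * k.choose s)
        = (-1) ^ s * k.choose s * ∫ x in (0 : ℝ)..1, x ^ (k - s + 1) := by
          rw [← intervalIntegral.integral_const_mul]
          exact intervalIntegral.integral_congr fun x _ => by ring
      _ = _ := by
          rw [integral_pow]
          push_cast
          ring
  have hflip : ∫ x in (0 : ℝ)..1, x * (-1 + x) ^ k =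
      (-1) ^ k * ∫ x in (0 : ℝ)..1, x ^ 1 * (1 - x) ^ k := by
    rw [← intervalIntegral.integral_const_mul]
    exact intervalIntegral.integral_congr fun x _ => by
      rw [show -1 + x = -(1 - x) by ring, neg_pow]; ring
  rw [← hsum, hflip, integral_pow_mul_one_sub_pow, show 1 + k + 1 = k + 2 by ring]
  simp only [Nat.factorial_succ, Nat.factorial_zero]
  push_cast
  field_simp
  ring

theorem integral_one_sub_mul_jacobiP02 (k : ℕ) :
    ∫ t in (0 : ℝ)..1, (1 - t) * jacobiP02 k (1 - 2 * t) = (-1) ^ k / ((k + 1) * (k + 2)) := by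
  rw [← sum_range_neg_one_pow_mul_choose_div]
  simp_rw [jacobiP02, Finset.mul_sum]
  rw [intervalIntegral.integral_finsetSum fun s _ => by
    apply Continuous.intervalIntegrable; fun_prop]
  refine Finset.sum_congr rfl fun s hs => ?_
  obtain ⟨m, rfl⟩ : ∃ m, k = s + m := ⟨k - s, by grind⟩
  calc ∫ t in (0 : ℝ)..1, (1 - t) * ((s + m).choose (s + m - s) * (s + m + 2).choose s *
          ((1 - 2 * t - 1) / 2) ^ s * ((1 - 2 * t + 1) / 2) ^ (s + m - s))
      = (-1) ^ s * (s + m).choose s * (s + m + 2).choose s *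
          ∫ t in (0 : ℝ)..1, t ^ s * (1 - t) ^ (m + 1) := by
        rw [← intervalIntegral.integral_const_mul]
        refine intervalIntegral.integral_congr fun t _ => ?_
        rw [Nat.add_sub_cancel_left, Nat.choose_symm_add]
        ring
    _ = _ := by
        have hfact := Nat.choose_mul_factorial_mul_factorial (Nat.le_add_right s (m + 2))
        rw [Nat.add_sub_cancel_left, show s + (m + 2) = s + m + 2 by ring,
          Nat.factorial_succ] at hfact
        rw [integral_pow_mul_one_sub_pow, Nat.add_sub_cancel_left,
          show s + (m + 1) + 1 = s + m + 2 by ring]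
        have hchoose : ((s + m + 2).choose s : ℝ) ≠ 0 := by
          exact_mod_cast (Nat.choose_pos (by lia)).ne'
        rw [← hfact]
        push_cast
        field_simp
        ring

local notation "E²" => EuclideanSpace ℝ (Fin 2)

def refTriangle : Set E² :=
  convexHull ℝ {0, EuclideanSpace.single 0 1, EuclideanSpace.single 1 1}

theorem isCompact_refTriangle : IsCompact refTriangle :=
  (toFinite _).isCompact_convexHull (𝕜 := ℝ)

theorem refTriangle_eq : refTriangle = {p : E² | 0 ≤ p 0 ∧ 0 ≤ p 1 ∧ p 0 + p 1 ≤ 1} := by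
  refine (convexHull_min ?_ ?_).antisymm fun p ⟨h0, h1, h01⟩ => ?_
  · rintro _ (rfl | rfl | rfl) <;> simp
  · rintro p ⟨hp0, hp1, hp⟩ q ⟨hq0, hq1, hq⟩ a b ha hb hab
    refine ⟨?_, ?_, ?_⟩ <;> simp only [PiLp.add_apply, PiLp.smul_apply, smul_eq_mul]
    · positivity
    · positivity
    · nlinarith
  have hp : p = ∑ i, ![1 - p 0 - p 1, p 0, p 1] i •
      ![0, EuclideanSpace.single 0 1, EuclideanSpace.single 1 1] i := by
    ext j; fin_cases j <;> simp [Fin.sum_univ_three]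
  rw [hp]
  refine (convex_convexHull ℝ _).sum_mem (fun i _ => ?_) ?_
    (fun i _ => subset_convexHull ℝ _ ?_)
  · fin_cases i <;> simp <;> linarith
  · simp [Fin.sum_univ_three]; ring
  · fin_cases i <;> simp

theorem integral_indicator_triangle_fibre (g : ℝ → ℝ) (x : ℝ) :
    ∫ y, {q : ℝ × ℝ | 0 ≤ q.1 ∧ 0 ≤ q.2 ∧ q.1 + q.2 ≤ 1}.indicator (fun q => g q.1) (x, y) =
      (Icc 0 1).indicator (fun x => (1 - x) * g x) x := by
  by_cases hx : x ∈ Icc 0 1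
  · have hfibre : (fun y => {q : ℝ × ℝ | 0 ≤ q.1 ∧ 0 ≤ q.2 ∧ q.1 + q.2 ≤ 1}.indicator
        (fun q => g q.1) (x, y)) = (Icc 0 (1 - x)).indicator fun _ => g x := by
      ext y
      simp only [indicator_apply, mem_Icc, mem_ofPred_eq]
      congr 1
      grind
    rw [hfibre, integral_indicator_const _ measurableSet_Icc,
      Real.volume_real_Icc_of_le (by linarith [hx.2]), indicator_of_mem hx, smul_eq_mul, sub_zero]
  · rw [indicator_of_notMem hx]
    refine integral_eq_zero_of_ae (Filter.Eventually.of_forall fun y => ?_)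
    simp only [Pi.zero_apply, indicator_apply_eq_zero]
    grind

theorem setIntegral_triangle_comp_fst (g : ℝ → ℝ) (hg : Continuous g) :
    ∫ q in {q : ℝ × ℝ | 0 ≤ q.1 ∧ 0 ≤ q.2 ∧ q.1 + q.2 ≤ 1}, g q.1 =
      ∫ t in (0 : ℝ)..1, (1 - t) * g t := by
  set S := {q : ℝ × ℝ | 0 ≤ q.1 ∧ 0 ≤ q.2 ∧ q.1 + q.2 ≤ 1}
  have hS : IsCompact S := by
    refine isCompact_Icc.of_isClosed_subset ?_ (fun q ⟨h1, h2, h12⟩ =>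
      (⟨⟨h1, h2⟩, ⟨by linarith, by linarith⟩⟩ : q ∈ Icc ((0 : ℝ), (0 : ℝ)) (1, 1)))
    exact (isClosed_le continuous_const continuous_fst).inter
      ((isClosed_le continuous_const continuous_snd).inter
        (isClosed_le (continuous_fst.add continuous_snd) continuous_const))
  have hint : Integrable (S.indicator fun q => g q.1) (volume.prod volume) :=
    ((hg.comp continuous_fst).continuousOn.integrableOn_compact hS).integrable_indicator
      hS.measurableSet
  rw [← integral_indicator hS.measurableSet, Measure.volume_eq_prod, integral_prod _ hint]
  simp only [S, integral_indicator_triangle_fibre]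
  rw [integral_indicator measurableSet_Icc, integral_Icc_eq_integral_Ioc,
    ← intervalIntegral.integral_of_le zero_le_one]

theorem setIntegral_refTriangle_comp_fst (g : ℝ → ℝ) (hg : Continuous g) :
    ∫ p in refTriangle, g (p 0) = ∫ t in (0 : ℝ)..1, (1 - t) * g t := by
  let e : E² ≃ᵐ ℝ × ℝ :=
    (MeasurableEquiv.toLp 2 (Fin 2 → ℝ)).symm.trans MeasurableEquiv.finTwoArrow
  have he : MeasurePreserving e := (volume_preserving_finTwoArrow ℝ).comp
    (EuclideanSpace.volume_preserving_symm_measurableEquiv_toLp (Fin 2))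
  rw [refTriangle_eq, ← setIntegral_triangle_comp_fst g hg,
    ← he.setIntegral_preimage_emb e.measurableEmbedding]
  rfl

theorem setIntegral_image_affineMap {E F : Type*} [NormedAddCommGroup E] [NormedSpace ℝ E]
    [FiniteDimensional ℝ E] [MeasurableSpace E] [BorelSpace E] [NormedAddCommGroup F]
    [NormedSpace ℝ F] (μ : Measure E) [μ.IsAddHaarMeasure] (T : E →ᵃ[ℝ] E)
    (hT : Function.Injective T) {s : Set E} (hs : MeasurableSet s) (g : E → F) :
    ∫ x in T '' s, g x ∂μ = |LinearMap.det T.linear| • ∫ x in s, g (T x) ∂μ := by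
  have hT' (x : E) (_ : x ∈ s) :
      HasFDerivWithinAt T (LinearMap.toContinuousLinearMap T.linear) s x :=
    (⟨T, T.continuous_of_finiteDimensional⟩ : E →ᴬ[ℝ] E).hasFDerivWithinAt
  rw [integral_image_eq_integral_abs_det_fderiv_smul μ hs hT' hT.injOn, integral_smul]
  rfl

section TriangleMap

variable {V : Type*} [AddCommGroup V] [Module ℝ V]

noncomputable def triangleMap (a b c : V) : E² →ᵃ[ℝ] V :=
  ((EuclideanSpace.proj (0 : Fin 2) (𝕜 := ℝ)).toLinearMap.smulRight (a - c) +
    (EuclideanSpace.proj (1 : Fin 2) (𝕜 := ℝ)).toLinearMap.smulRight (b - c)).toAffineMap +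
    AffineMap.const ℝ E² c

theorem triangleMap_apply (a b c : V) (p : E²) :
    triangleMap a b c p = p 0 • a + p 1 • b + (1 - p 0 - p 1) • c := by
  simp [triangleMap]
  module

theorem AffineMap.map_triangleMap (f : V →ᵃ[ℝ] ℝ) (a b c : V) (p : E²) :
    f (triangleMap a b c p) = p 0 * f a + p 1 * f b + (1 - p 0 - p 1) * f c := by
  have hT : triangleMap a b c p = (p 0 • (a -ᵥ c) + p 1 • (b -ᵥ c)) +ᵥ c := by
    simp [triangleMap]
  rw [hT, f.map_vadd, map_add, map_smul, map_smul, f.linearMap_vsub, f.linearMap_vsub]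
  simp only [vsub_eq_sub, vadd_eq_add, smul_eq_mul]
  ring

theorem triangleMap_injective {a b c : V} (h : AffineIndependent ℝ ![a, b, c]) :
    Function.Injective (triangleMap a b c) := by
  intro p q hpq
  have hw := h.eq_of_sum_eq_sum (s := Finset.univ) (w₁ := ![p 0, p 1, 1 - p 0 - p 1])
    (w₂ := ![q 0, q 1, 1 - q 0 - q 1]) (by simp [Fin.sum_univ_three])
    (by simpa [Fin.sum_univ_three, triangleMap_apply] using hpq)
  ext j
  fin_cases j
  · simpa using hw 0
  · simpa using hw 1

theorem image_triangleMap_refTriangle (a b c : V) :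
    triangleMap a b c '' refTriangle = convexHull ℝ {a, b, c} := by
  rw [refTriangle, AffineMap.image_convexHull]
  congr 1
  ext x
  simp [triangleMap_apply]
  tauto

end TriangleMap

theorem setIntegral_convexHull_comp_barycentric {a b c : E²}
    (h : AffineIndependent ℝ ![a, b, c]) {f : E² →ᵃ[ℝ] ℝ} (ha : f a = 1) (hb : f b = 0)
    (hc : f c = 0) (g : ℝ → ℝ) (hg : Continuous g) :
    ∫ x in convexHull ℝ {a, b, c}, g (f x) =
      2 * volume.real (convexHull ℝ {a, b, c}) * ∫ t in (0 : ℝ)..1, (1 - t) * g t := by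
  set T := triangleMap a b c
  have hcov (F : E² → ℝ) : ∫ x in convexHull ℝ {a, b, c}, F x =
      |LinearMap.det T.linear| * ∫ p in refTriangle, F (T p) := by
    rw [← image_triangleMap_refTriangle, setIntegral_image_affineMap volume (triangleMap a b c)
      (triangleMap_injective h) isCompact_refTriangle.measurableSet, smul_eq_mul]
  have hfT (p : E²) : f (T p) = p 0 := by simp [T, AffineMap.map_triangleMap, ha, hb, hc]
  have hvol : volume.real (convexHull ℝ {a, b, c}) = |LinearMap.det T.linear| / 2 := by
    have := hcov fun _ => 1
    rw [setIntegral_const, smul_eq_mul, mul_one,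
      setIntegral_refTriangle_comp_fst (fun _ => 1) continuous_const] at this
    simpa [intervalIntegral.integral_comp_sub_left fun x : ℝ => x, div_eq_mul_inv] using this
  rw [hcov, hvol]
  simp_rw [hfT]
  rw [setIntegral_refTriangle_comp_fst g hg]
  ring

theorem stmt11 (k : ℕ) (z A B : EuclideanSpace ℝ (Fin 2))
    (hind : AffineIndependent ℝ ![z, A, B])
    (K : Set (EuclideanSpace ℝ (Fin 2))) (hK : K = convexHull ℝ {z, A, B})
    (lam : EuclideanSpace ℝ (Fin 2) →ᵃ[ℝ] ℝ)
    (hz : lam z = 1) (hA : lam A = 0) (hB : lam B = 0) :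
    ∫ x in K, jacobiP02 k (1 - 2 * lam x) =
      (-1 : ℝ) ^ k * (volume K).toReal / ((k + 2).choose 2 : ℝ) := by
  have hP : Continuous fun t : ℝ => jacobiP02 k (1 - 2 * t) := by
    unfold jacobiP02; fun_prop
  subst hK
  rw [setIntegral_convexHull_comp_barycentric hind hz hA hB _ hP, integral_one_sub_mul_jacobiP02,
    Nat.cast_choose_two, measureReal_def]
  push_cast
  rw [show (k : ℝ) + 2 - 1 = k + 1 by ring]
  field_simp
end
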